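/- arXiv:1206.4343 — 3 statements merged into one kernel-verified Lean document; each statement's English description precedes it below -/
import Mathlib

section
/- Let D be a filtered triangulated category with shift of filtration (s, α), and let M be an object of D. Then the morphism α_{sM} : sM → M induced by the natural transformation α satisfies gr_i(α_{sM}) = 0 for all integers i. -/
open CategoryTheory CategoryTheory.Limits CategoryTheory.Pretriangulated

universe v u

/-- A filtered triangulated category in the sense of Beilinson: a (pre)triangulated
category `C` equipped with a bounded filtration by strictly full triangulated
subcategories `F^{≤n}`, `F^{≥n}`, truncation functors `wLe n ⊣ incl`, `incl ⊣ wGe n`,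
functorial distinguished truncation triangles, and a shift-of-filtration `(s, α)`. -/
structure FilteredTriangulated (C : Type u) [Category.{v} C]
    [HasZeroObject C] [Preadditive C] [HasShift C ℤ]
    [∀ n : ℤ, (CategoryTheory.shiftFunctor C n).Additive] [Pretriangulated C] where
  /-- the subcategory `F^{≤ n} C` -/
  Fle : ℤ → Set C
  /-- the subcategory `F^{≥ n} C` -/
  Fge : ℤ → Set C
  Fle_iso : ∀ (n : ℤ) {X Y : C}, (X ≅ Y) → X ∈ Fle n → Y ∈ Fle n
  Fge_iso : ∀ (n : ℤ) {X Y : C}, (X ≅ Y) → X ∈ Fge n → Y ∈ Fge n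
  Fle_shift : ∀ (n k : ℤ) (X : C), X ∈ Fle n → X⟦k⟧ ∈ Fle n
  Fge_shift : ∀ (n k : ℤ) (X : C), X ∈ Fge n → X⟦k⟧ ∈ Fge n
  Fle_ext₂ : ∀ (n : ℤ) (T : Triangle C), T ∈ (distTriang C) →
    T.obj₁ ∈ Fle n → T.obj₃ ∈ Fle n → T.obj₂ ∈ Fle n
  Fge_ext₂ : ∀ (n : ℤ) (T : Triangle C), T ∈ (distTriang C) →
    T.obj₁ ∈ Fge n → T.obj₃ ∈ Fge n → T.obj₂ ∈ Fge n
  /-- axiom (1): no homs from `F^{≤ n}` to `F^{≥ n+1}` -/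
  hom_vanish : ∀ {M N : C} (n : ℤ), M ∈ Fle n → N ∈ Fge (n + 1) → ∀ f : M ⟶ N, f = 0
  /-- axiom (2) -/
  le_mono : ∀ n : ℤ, Fle n ⊆ Fle (n + 1)
  ge_anti : ∀ n : ℤ, Fge (n + 1) ⊆ Fge n
  /-- axiom (4): boundedness -/
  exhaustive_le : ∀ X : C, ∃ n : ℤ, X ∈ Fle n
  exhaustive_ge : ∀ X : C, ∃ n : ℤ, X ∈ Fge n
  /-- axiom (5): the shift of filtration -/
  s : C ⥤ C
  s_isEquivalence : s.IsEquivalence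
  s_le : ∀ (n : ℤ) (X : C), X ∈ Fle n → s.obj X ∈ Fle (n + 1)
  s_ge : ∀ (n : ℤ) (X : C), X ∈ Fge n → s.obj X ∈ Fge (n + 1)
  /-- the natural transformation `α : s → id` -/
  α : s ⟶ 𝟭 C
  /-- `α_{sX} = s(α_X)`, i.e. `α_M = s(α_{s⁻¹ M})` -/
  α_shift : ∀ X : C, α.app (s.obj X) = s.map (α.app X)
  /-- axiom (6): `Hom(M, N) ≅ Hom(M, sN)` for `M ∈ F^{≥1}`, `N ∈ F^{≤0}` -/
  α_bij₁ : ∀ (M N : C), M ∈ Fge 1 → N ∈ Fle 0 →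
    Function.Bijective (fun f : M ⟶ s.obj N => f ≫ α.app N)
  /-- axiom (6): `Hom(s⁻¹M, N) ≅ Hom(M, N)` for `M ∈ F^{≥0}`, `N ∈ F^{≤0}` -/
  α_bij₂ : ∀ (M N : C), M ∈ Fge 0 → N ∈ Fle 0 →
    Function.Bijective (fun f : M ⟶ N => α.app M ≫ f)
  /-- the truncation functor `w_{≤ n}`, right adjoint to the inclusion of `F^{≤ n}` -/
  wLe : ℤ → C ⥤ C
  /-- the truncation functor `w_{≥ n}`, left adjoint to the inclusion of `F^{≥ n}` -/
  wGe : ℤ → C ⥤ C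
  wLe_mem : ∀ (n : ℤ) (X : C), (wLe n).obj X ∈ Fle n
  wGe_mem : ∀ (n : ℤ) (X : C), (wGe n).obj X ∈ Fge n
  wLe_preserves_ge : ∀ (n m : ℤ) (X : C), X ∈ Fge m → (wLe n).obj X ∈ Fge m
  wGe_preserves_le : ∀ (n m : ℤ) (X : C), X ∈ Fle m → (wGe n).obj X ∈ Fle m
  /-- counit `w_{≤ n} Z → Z` -/
  ι : ∀ n : ℤ, wLe n ⟶ 𝟭 C
  /-- unit `Z → w_{≥ n} Z` -/
  π : ∀ n : ℤ, 𝟭 C ⟶ wGe n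
  ι_iso : ∀ (n : ℤ) (X : C), X ∈ Fle n → IsIso ((ι n).app X)
  π_iso : ∀ (n : ℤ) (X : C), X ∈ Fge n → IsIso ((π n).app X)
  /-- adjunction-type universal properties of the truncations -/
  ι_universal : ∀ (n : ℤ) {X Z : C}, X ∈ Fle n → ∀ f : X ⟶ Z,
    ∃! g : X ⟶ (wLe n).obj Z, g ≫ (ι n).app Z = f
  π_universal : ∀ (n : ℤ) {Z Y : C}, Y ∈ Fge n → ∀ f : Z ⟶ Y,
    ∃! g : (wGe n).obj Z ⟶ Y, (π n).app Z ≫ g = f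
  /-- connecting morphism of the functorial truncation triangle -/
  δ : ∀ n : ℤ, wGe n ⟶ wLe (n - 1) ⋙ CategoryTheory.shiftFunctor C (1 : ℤ)
  /-- axiom (3): the functorial triangle `w_{≤ n-1} Z → Z → w_{≥ n} Z → ` is distinguished -/
  triangle_dist : ∀ (n : ℤ) (Z : C),
    Triangle.mk ((ι (n - 1)).app Z) ((π n).app Z) ((δ n).app Z) ∈ (distTriang C)
  /-- the canonical natural transformation `w_{≤ n-1} → w_{≤ n}` -/
  ιmono : ∀ n : ℤ, wLe (n - 1) ⟶ wLe n
  ιmono_comp : ∀ n : ℤ, ιmono n ≫ ι n = ι (n - 1)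
  /-- connecting morphism `gr_n Z → (w_{≤ n-1} Z)[1]` -/
  δ' : ∀ n : ℤ, wLe n ⋙ wGe n ⟶ wLe (n - 1) ⋙ CategoryTheory.shiftFunctor C (1 : ℤ)
  /-- the triangle `w_{≤ n-1} Z → w_{≤ n} Z → gr_n Z → ` is distinguished -/
  triangle_dist' : ∀ (n : ℤ) (Z : C),
    Triangle.mk ((ιmono n).app Z) ((π n).app ((wLe n).obj Z)) ((δ' n).app Z) ∈ (distTriang C)

namespace FilteredTriangulated

variable {C : Type u} [Category.{v} C] [HasZeroObject C] [Preadditive C] [HasShift C ℤ]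
  [∀ n : ℤ, (CategoryTheory.shiftFunctor C n).Additive] [Pretriangulated C]

/-- The functor `gr_n = w_{≥ n} ∘ w_{≤ n}`. -/
def gr (F : FilteredTriangulated C) (n : ℤ) : C ⥤ C := F.wLe n ⋙ F.wGe n

end FilteredTriangulated

/-!
A map out of `w_{≥ i} X` into `F^{≥ i}` is determined by its composite with `π`, so `gr_i (α_M)`
vanishes as soon as `w_{≤ i}(α_M)` followed by `π : w_{≤ i} M → gr_i M` does. Put `B = w_{≥ i} M`. Naturality of `α` gives
`w_{≤ i}(α_M) ≫ w_{≤ i}(π_M) = w_{≤ i}(s π_M) ≫ w_{≤ i}(α_B)`, and this is zero because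
`s B ∈ F^{≥ i+1}`, so that `w_{≤ i}(s B) = 0`. It therefore suffices that
`π : w_{≤ i} M → gr_i M` factors through `w_{≤ i}(π_M) : w_{≤ i} M → w_{≤ i} B`. This is a
diagram chase in the truncation triangles of `M` and `B` at `i + 1`, whose third terms are
identified by the isomorphism `w_{≥ i+1}(π_M)`.
-/

namespace CategoryTheory.Pretriangulated.Triangle

variable {C : Type u} [Category.{v} C] [HasZeroObject C] [Preadditive C] [HasShift C ℤ]
  [∀ n : ℤ, (CategoryTheory.shiftFunctor C n).Additive] [Pretriangulated C]

lemma yoneda_exact₁ (T : Triangle C) (hT : T ∈ distTriang C) {X : C} (f : T.obj₁ ⟶ X)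
    (hf : T.mor₃ ≫ f⟦(1 : ℤ)⟧' = 0) : ∃ g : T.obj₂ ⟶ X, f = T.mor₁ ≫ g := by
  obtain ⟨g, hg⟩ := yoneda_exact₃ _ (rot_of_distTriang _ hT) _ hf
  obtain ⟨g, rfl⟩ : ∃ g' : T.obj₂ ⟶ X, g'⟦(1 : ℤ)⟧' = g :=
    (CategoryTheory.shiftFunctor C (1 : ℤ)).map_surjective g
  refine ⟨-g, (CategoryTheory.shiftFunctor C (1 : ℤ)).map_injective ?_⟩
  rw [Functor.map_comp, Functor.map_neg, Preadditive.comp_neg, hg]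
  exact Preadditive.neg_comp _ _

end CategoryTheory.Pretriangulated.Triangle

namespace FilteredTriangulated

variable {C : Type u} [Category.{v} C] [HasZeroObject C] [Preadditive C] [HasShift C ℤ]
  [∀ n : ℤ, (CategoryTheory.shiftFunctor C n).Additive] [Pretriangulated C]
  (F : FilteredTriangulated C)

lemma Fge_antitone : Antitone F.Fge :=
  antitone_int_of_succ_le F.ge_anti

lemma α_naturality {X Y : C} (f : X ⟶ Y) : F.s.map f ≫ F.α.app Y = F.α.app X ≫ f :=
  F.α.naturality f

lemma ι_naturality (n : ℤ) {X Y : C} (f : X ⟶ Y) :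
    (F.wLe n).map f ≫ (F.ι n).app Y = (F.ι n).app X ≫ f :=
  (F.ι n).naturality f

lemma π_naturality (n : ℤ) {X Y : C} (f : X ⟶ Y) :
    f ≫ (F.π n).app Y = (F.π n).app X ≫ (F.wGe n).map f :=
  (F.π n).naturality f

lemma δ_naturality (n : ℤ) {X Y : C} (f : X ⟶ Y) :
    (F.wGe n).map f ≫ (F.δ n).app Y = (F.δ n).app X ≫ ((F.wLe (n - 1)).map f)⟦(1 : ℤ)⟧' :=
  (F.δ n).naturality f

lemma π_comp_δ (n : ℤ) (X : C) : (F.π n).app X ≫ (F.δ n).app X = 0 :=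
  comp_distTriang_mor_zero₂₃ _ (F.triangle_dist n X)

lemma wGe_hom_ext {n : ℤ} {X Y : C} (hY : Y ∈ F.Fge n) {f g : (F.wGe n).obj X ⟶ Y}
    (h : (F.π n).app X ≫ f = (F.π n).app X ≫ g) : f = g :=
  (F.π_universal n hY _).unique h rfl

lemma isZero_wLe_obj_of_mem_Fge {n : ℤ} {X : C} (hX : X ∈ F.Fge (n + 1)) : IsZero ((F.wLe n).obj X) :=
  (IsZero.iff_id_eq_zero _).2 <|
    F.hom_vanish n (F.wLe_mem n X) (F.wLe_preserves_ge n (n + 1) X hX) _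

lemma isIso_wGe_map_π {m n : ℤ} (h : m ≤ n) (M : C) :
    IsIso ((F.wGe n).map ((F.π m).app M)) := by
  obtain ⟨r, hr⟩ :=
    (F.π_universal m (Z := M) (F.Fge_antitone h (F.wGe_mem n M)) ((F.π n).app M)).exists
  obtain ⟨w, hw⟩ := (F.π_universal n (F.wGe_mem n M) r).exists
  refine ⟨w, F.wGe_hom_ext (X := M) (F.wGe_mem n M) ?_, F.wGe_hom_ext (F.wGe_mem n _) ?_⟩
  · dsimp only [Functor.id_obj]
    rw [← Category.assoc, ← π_naturality, Category.assoc, hw, hr, Category.comp_id]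
  · dsimp only [Functor.id_obj]
    rw [← Category.assoc, hw, Category.comp_id]
    refine F.wGe_hom_ext (X := M) (F.Fge_antitone h (F.wGe_mem n _)) ?_
    dsimp only [Functor.id_obj]
    rw [← Category.assoc, hr, π_naturality]

/-- The obstruction `δ ≫ z⟦1⟧` to extending `z` along `ι` is also the obstruction of a map that
factors through `w_{≤ m-1}(π_M)`. -/
lemma exists_δ_comp_shift_map_eq (m : ℤ) (M : C) {Z : C} (hZ : Z ∈ F.Fge (m - 1))
    (z : (F.wLe (m - 1)).obj M ⟶ Z) :
    ∃ y : (F.wLe (m - 1)).obj ((F.wGe (m - 1)).obj M) ⟶ Z,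
      (F.δ m).app M ≫ ((F.wLe (m - 1)).map ((F.π (m - 1)).app M) ≫ y)⟦(1 : ℤ)⟧' =
        (F.δ m).app M ≫ z⟦(1 : ℤ)⟧' := by
  set v := (F.π (m - 1)).app M
  have : IsIso ((F.wGe m).map v) := F.isIso_wGe_map_π (by omega) M
  set k := inv ((F.wGe m).map v) ≫ (F.δ m).app M ≫ z⟦(1 : ℤ)⟧'
  have hk : (F.π m).app _ ≫ k = 0 := by
    refine F.wGe_hom_ext (X := M) (F.Fge_shift _ 1 Z hZ) ?_
    dsimp only [Functor.id_obj]
    rw [comp_zero, ← Category.assoc, π_naturality, Category.assoc, IsIso.hom_inv_id_assoc,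
      ← Category.assoc, π_comp_δ, zero_comp]
  obtain ⟨y, hy⟩ := Triangle.yoneda_exact₃ _ (F.triangle_dist m _) k hk
  obtain ⟨y, rfl⟩ : ∃ y' : (F.wLe (m - 1)).obj ((F.wGe (m - 1)).obj M) ⟶ Z, y'⟦(1 : ℤ)⟧' = y :=
    (shiftFunctor C (1 : ℤ)).map_surjective y
  refine ⟨y, ?_⟩
  calc (F.δ m).app M ≫ ((F.wLe (m - 1)).map v ≫ y)⟦(1 : ℤ)⟧'
      = (F.wGe m).map v ≫ k := by
        rw [hy, Functor.map_comp, ← Category.assoc, ← δ_naturality, Category.assoc]; rfl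
    _ = (F.δ m).app M ≫ z⟦(1 : ℤ)⟧' := IsIso.hom_inv_id_assoc _ _

lemma exists_wLe_map_π_comp_eq (n : ℤ) (M : C) {Z : C} (hZ : Z ∈ F.Fge n)
    (z : (F.wLe n).obj M ⟶ Z) :
    ∃ y : (F.wLe n).obj ((F.wGe n).obj M) ⟶ Z, (F.wLe n).map ((F.π n).app M) ≫ y = z := by
  obtain ⟨m, rfl⟩ : ∃ m, n = m - 1 := ⟨n + 1, by ring⟩
  obtain ⟨y, hy⟩ := F.exists_δ_comp_shift_map_eq m M hZ z
  set v : M ⟶ (F.wGe (m - 1)).obj M := (F.π (m - 1)).app M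
  obtain ⟨f, hf⟩ : ∃ f : M ⟶ Z, z - (F.wLe (m - 1)).map v ≫ y = (F.ι (m - 1)).app M ≫ f :=
    Triangle.yoneda_exact₁ _ (F.triangle_dist m M) _
      (by
        change (F.δ m).app M ≫ (z - (F.wLe (m - 1)).map v ≫ y)⟦(1 : ℤ)⟧' = 0
        rw [Functor.map_sub, Preadditive.comp_sub, hy, sub_self])
  obtain ⟨b, hb⟩ := (F.π_universal (m - 1) hZ f).exists
  refine ⟨y + (F.ι (m - 1)).app _ ≫ b, ?_⟩
  dsimp only [Functor.id_obj]
  rw [Preadditive.comp_add, ← Category.assoc, ι_naturality, Category.assoc, hb, ← hf]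
  abel

end FilteredTriangulated

open FilteredTriangulated in
/-- For every object `M` of a filtered triangulated category, the morphism
`α_M : sM → M` induced by the natural transformation `α : s → id` satisfies
`gr_i (α_M) = 0` for all integers `i`. -/
theorem gr_map_alpha_eq_zero {C : Type u} [Category.{v} C] [HasZeroObject C]
    [Preadditive C] [HasShift C ℤ] [∀ n : ℤ, (CategoryTheory.shiftFunctor C n).Additive]
    [Pretriangulated C] (F : FilteredTriangulated C) (M : C) (i : ℤ) :
    (F.gr i).map (F.α.app M) = 0 := by
  set B := (F.wGe i).obj M
  have hsB : IsZero ((F.wLe i).obj (F.s.obj B)) := F.isZero_wLe_obj_of_mem_Fge (F.s_ge i B (F.wGe_mem i M))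
  obtain ⟨y, hy⟩ := F.exists_wLe_map_π_comp_eq i M (F.wGe_mem i _) ((F.π i).app ((F.wLe i).obj M))
  have hα : (F.wLe i).map (F.α.app M) ≫ (F.π i).app ((F.wLe i).obj M) = 0 := by
    rw [← hy, ← Category.assoc, ← Functor.map_comp, ← α_naturality, Functor.map_comp,
      Category.assoc, hsB.eq_of_src ((F.wLe i).map (F.α.app B)) 0, zero_comp, comp_zero]
  change (F.wGe i).map ((F.wLe i).map (F.α.app M)) = 0
  refine F.wGe_hom_ext (F.wGe_mem i _) ?_
  dsimp only [Functor.id_obj]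
  rw [comp_zero, ← π_naturality, hα]
end

section
/- Let D be a filtered triangulated category with shift of filtration (s, α), let f : M → N be a morphism in D, and let C be a cone of the composition sM →(α_{sM}) M →(f) N, so that there is a distinguished triangle N → C → (sM)[1] → N[1]. Then for every integer n there is an isomorphism gr_n C ≅ gr_n((sM)[1]) ⊕ gr_n N. -/
open CategoryTheory CategoryTheory.Limits CategoryTheory.Pretriangulated

universe v u

/-!
By naturality of `α`, and since `s` raises the filtration degree, the map `w_{≤n}(α_M)` factors
through `w_{≤n-1} M → w_{≤n} M`, which `w_{≥n}` kills; hence `gr_n(α_M ≫ f) = 0`. The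
truncations carry distinguished triangles to distinguished triangles: a cone of `w_{≤n}(u)` maps
to the cone of `u` inducing bijections on `Hom(W, -)` for `W ∈ F^{≤n}` (five lemma), so it is
`w_{≤n}` of that cone, and dually for `w_{≥n}`. Thus `gr_n Cn` is a cone of the zero morphism
`gr_n(α_M ≫ f)`, and such a cone splits.
-/

namespace CategoryTheory

section

variable {D : Type*} [Category D]

lemma isIso_of_yoneda_map_bijective_of_mem (P : Set D) {X Y : D} (hX : X ∈ P) (hY : Y ∈ P)
    (f : X ⟶ Y) (hf : ∀ W ∈ P, Function.Bijective fun x : W ⟶ X => x ≫ f) : IsIso f := by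
  obtain ⟨g, hg : g ≫ f = 𝟙 Y⟩ := (hf Y hY).2 (𝟙 Y)
  exact ⟨g, (hf X hX).1 (by simp [hg]), hg⟩

lemma isIso_of_coyoneda_map_bijective_of_mem (P : Set D) {X Y : D} (hX : X ∈ P) (hY : Y ∈ P)
    (f : X ⟶ Y) (hf : ∀ W ∈ P, Function.Bijective fun x : Y ⟶ W => f ≫ x) : IsIso f := by
  obtain ⟨g, hg : f ≫ g = 𝟙 X⟩ := (hf X hX).2 (𝟙 X)
  exact ⟨g, hg, (hf Y hY).1 (by simp [reassoc_of% hg])⟩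

variable {A : Type*} [AddGroup A] [HasShift D A]

lemma yoneda_map_shift_bijective {W K Z : D} (k : K ⟶ Z) (a : A)
    (hk : Function.Bijective fun x : W⟦-a⟧ ⟶ K => x ≫ k) :
    Function.Bijective fun x : W ⟶ K⟦a⟧ => x ≫ k⟦a⟧' := by
  let e := (shiftEquiv D a).symm.toAdjunction.homEquiv
  have : (fun x : W ⟶ K⟦a⟧ => x ≫ k⟦a⟧') = e W Z ∘ (fun x => x ≫ k) ∘ (e W K).symm := by
    funext x
    exact (congrArg (· ≫ k⟦a⟧') ((e W K).apply_symm_apply x).symm).trans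
      (Adjunction.homEquiv_naturality_right _ _ _).symm
  rw [this]
  exact (e W Z).bijective.comp (hk.comp (e W K).symm.bijective)

lemma coyoneda_map_shift_bijective {W K Z : D} (k : Z ⟶ K) (a : A)
    (hk : Function.Bijective fun x : K ⟶ W⟦-a⟧ => k ≫ x) :
    Function.Bijective fun x : K⟦a⟧ ⟶ W => k⟦a⟧' ≫ x := by
  let e := (shiftEquiv D a).toAdjunction.homEquiv
  have : (fun x : K⟦a⟧ ⟶ W => k⟦a⟧' ≫ x) = (e Z W).symm ∘ (fun x => k ≫ x) ∘ e K W := by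
    funext x
    exact (congrArg (k⟦a⟧' ≫ ·) ((e K W).symm_apply_apply x).symm).trans
      (Adjunction.homEquiv_naturality_left_symm _ _ _).symm
  rw [this]
  exact (e Z W).symm.bijective.comp (hk.comp (e K W).bijective)

end

namespace Pretriangulated

variable {C : Type u} [Category.{v} C] [HasZeroObject C] [Preadditive C] [HasShift C ℤ]
  [∀ n : ℤ, (shiftFunctor C n).Additive] [Pretriangulated C]
  {T T' : Triangle C} (φ : T ⟶ T') (hT : T ∈ distTriang C) (hT' : T' ∈ distTriang C) (W : C)

include hT hT' in
lemma yoneda_map_hom₃_bijective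
    (h₁ : Function.Surjective fun x : W ⟶ T.obj₁ => x ≫ φ.hom₁)
    (h₂ : Function.Bijective fun x : W ⟶ T.obj₂ => x ≫ φ.hom₂)
    (h₁' : Function.Bijective fun x : W ⟶ T.obj₁⟦(1 : ℤ)⟧ => x ≫ φ.hom₁⟦(1 : ℤ)⟧')
    (h₂' : Function.Injective fun x : W ⟶ T.obj₂⟦(1 : ℤ)⟧ => x ≫ φ.hom₂⟦(1 : ℤ)⟧') :
    Function.Bijective fun x : W ⟶ T.obj₃ => x ≫ φ.hom₃ := by
  refine ⟨(injective_iff_map_eq_zero (Preadditive.rightComp W φ.hom₃)).2 fun x₃ hx₃ => ?_,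
    fun y₃ => ?_⟩
  · change x₃ ≫ φ.hom₃ = 0 at hx₃
    obtain ⟨x₂, rfl⟩ := Triangle.coyoneda_exact₃ _ hT x₃ (h₁'.1 (by
      simp only [Category.assoc, φ.comm₃, reassoc_of% hx₃, zero_comp]))
    obtain ⟨y₁, hy₁⟩ := Triangle.coyoneda_exact₂ _ hT' (x₂ ≫ φ.hom₂) (by
      rw [Category.assoc, ← φ.comm₂, ← Category.assoc, hx₃])
    obtain ⟨x₁, rfl⟩ := h₁ y₁
    obtain rfl : x₂ = x₁ ≫ T.mor₁ := h₂.1 (by simp only [hy₁, Category.assoc, φ.comm₁])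
    simp [comp_distTriang_mor_zero₁₂ _ hT]
  · obtain ⟨x₁', hx₁'⟩ := h₁'.2 (y₃ ≫ T'.mor₃)
    obtain ⟨x₃, rfl⟩ := Triangle.coyoneda_exact₁ _ hT x₁' (h₂' (by
      dsimp only at hx₁' ⊢
      rw [zero_comp, Category.assoc, ← Functor.map_comp, φ.comm₁, Functor.map_comp,
        ← Category.assoc, hx₁', Category.assoc, comp_distTriang_mor_zero₃₁ _ hT', comp_zero]))
    obtain ⟨y₂, hy₂⟩ := Triangle.coyoneda_exact₃ _ hT' (y₃ - x₃ ≫ φ.hom₃) (by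
      simp only [Preadditive.sub_comp, Category.assoc, ← φ.comm₃, ← hx₁', sub_self])
    obtain ⟨x₂, rfl⟩ := h₂.2 y₂
    refine ⟨x₃ + x₂ ≫ T.mor₂, ?_⟩
    dsimp only at hy₂ ⊢
    rw [Preadditive.add_comp, Category.assoc, φ.comm₂, ← Category.assoc, ← hy₂]
    abel

include hT hT' in
lemma coyoneda_map_hom₃_bijective
    (h₁ : Function.Injective fun x : T'.obj₁ ⟶ W => φ.hom₁ ≫ x)
    (h₂ : Function.Bijective fun x : T'.obj₂ ⟶ W => φ.hom₂ ≫ x)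
    (h₁' : Function.Bijective fun x : T'.obj₁⟦(1 : ℤ)⟧ ⟶ W => φ.hom₁⟦(1 : ℤ)⟧' ≫ x)
    (h₂' : Function.Surjective fun x : T'.obj₂⟦(1 : ℤ)⟧ ⟶ W => φ.hom₂⟦(1 : ℤ)⟧' ≫ x) :
    Function.Bijective fun x : T'.obj₃ ⟶ W => φ.hom₃ ≫ x := by
  refine ⟨(injective_iff_map_eq_zero (Preadditive.leftComp W φ.hom₃)).2 fun y₃ hy₃ => ?_,
    fun x₃ => ?_⟩
  · change φ.hom₃ ≫ y₃ = 0 at hy₃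
    obtain ⟨y₁', rfl⟩ := Triangle.yoneda_exact₃ _ hT' y₃ (h₂.1 (by
      dsimp only
      rw [← Category.assoc, ← φ.comm₂, Category.assoc, hy₃, comp_zero, comp_zero]))
    obtain ⟨x₂', hx₂'⟩ := Triangle.yoneda_exact₃ _ (rot_of_distTriang _ hT)
      (φ.hom₁⟦(1 : ℤ)⟧' ≫ y₁') (by
        change T.mor₃ ≫ φ.hom₁⟦(1 : ℤ)⟧' ≫ y₁' = 0
        rw [← Category.assoc, φ.comm₃, Category.assoc, hy₃])
    obtain ⟨y₂', rfl⟩ := h₂' x₂'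
    obtain rfl : y₁' = -(T'.mor₁⟦(1 : ℤ)⟧' ≫ y₂') := h₁'.1 (by
      refine hx₂'.trans ?_
      change (-(T.mor₁⟦(1 : ℤ)⟧')) ≫ φ.hom₂⟦(1 : ℤ)⟧' ≫ y₂' =
        φ.hom₁⟦(1 : ℤ)⟧' ≫ (-(T'.mor₁⟦(1 : ℤ)⟧' ≫ y₂'))
      rw [Preadditive.neg_comp, Preadditive.comp_neg, ← Functor.map_comp_assoc, φ.comm₁,
        Functor.map_comp_assoc])
    simp [comp_distTriang_mor_zero₃₁_assoc _ hT']
  · obtain ⟨y₂, hy₂⟩ := h₂.2 (T.mor₂ ≫ x₃)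
    obtain ⟨y₃, rfl⟩ := Triangle.yoneda_exact₂ _ hT' y₂ (h₁ (by
      dsimp only at hy₂ ⊢
      rw [← Category.assoc, ← φ.comm₁, Category.assoc, hy₂,
        comp_distTriang_mor_zero₁₂_assoc _ hT, zero_comp, comp_zero]))
    obtain ⟨x₁', hx₁'⟩ := Triangle.yoneda_exact₃ _ hT (x₃ - φ.hom₃ ≫ y₃) (by
      dsimp only at hy₂
      rw [Preadditive.comp_sub, ← hy₂, φ.comm₂_assoc, sub_self])
    obtain ⟨y₁', rfl⟩ := h₁'.2 x₁'
    refine ⟨y₃ + T'.mor₃ ≫ y₁', ?_⟩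
    dsimp only at hx₁' ⊢
    rw [Preadditive.comp_add, ← φ.comm₃_assoc, ← hx₁']
    abel

lemma nonempty_iso_biprod_of_distTriang_of_mor₁_eq_zero {T : Triangle C} (hT : T ∈ distTriang C)
    (h : T.mor₁ = 0) : Nonempty (T.obj₃ ≅ T.obj₂ ⊞ T.obj₁⟦(1 : ℤ)⟧) := by
  obtain ⟨e, -⟩ := exists_iso_binaryBiproduct_of_distTriang _ (rot_of_distTriang _ hT)
    (by simp [h]; rfl)
  exact ⟨e⟩

end Pretriangulated

end CategoryTheory

namespace FilteredTriangulated

open Pretriangulated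

variable {C : Type u} [Category.{v} C] [HasZeroObject C] [Preadditive C] [HasShift C ℤ]
  [∀ n : ℤ, (shiftFunctor C n).Additive] [Pretriangulated C]
  (F : FilteredTriangulated C) (n : ℤ)

lemma yoneda_map_ι_app_bijective {W : C} (hW : W ∈ F.Fle n) (Z : C) :
    Function.Bijective fun x : W ⟶ (F.wLe n).obj Z => x ≫ (F.ι n).app Z :=
  (Function.bijective_iff_existsUnique _).2 (F.ι_universal n hW)

lemma coyoneda_map_π_app_bijective {W : C} (hW : W ∈ F.Fge n) (Z : C) :
    Function.Bijective fun x : (F.wGe n).obj Z ⟶ W => (F.π n).app Z ≫ x :=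
  (Function.bijective_iff_existsUnique _).2 (F.π_universal n hW)

lemma yoneda_map_shift_ι_app_bijective {W : C} (hW : W ∈ F.Fle n) (Z : C) (a : ℤ) :
    Function.Bijective fun x : W ⟶ ((F.wLe n).obj Z)⟦a⟧ => x ≫ ((F.ι n).app Z)⟦a⟧' :=
  yoneda_map_shift_bijective _ a (F.yoneda_map_ι_app_bijective n (F.Fle_shift n (-a) W hW) Z)

lemma coyoneda_map_shift_π_app_bijective {W : C} (hW : W ∈ F.Fge n) (Z : C) (a : ℤ) :
    Function.Bijective fun x : ((F.wGe n).obj Z)⟦a⟧ ⟶ W => ((F.π n).app Z)⟦a⟧' ≫ x :=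
  coyoneda_map_shift_bijective _ a (F.coyoneda_map_π_app_bijective n (F.Fge_shift n (-a) W hW) Z)

lemma nonempty_iso_wLe_obj {K Z : C} (hK : K ∈ F.Fle n) (k : K ⟶ Z)
    (hk : ∀ W ∈ F.Fle n, Function.Bijective fun x : W ⟶ K => x ≫ k) :
    Nonempty (K ≅ (F.wLe n).obj Z) := by
  obtain ⟨k', hk', -⟩ := F.ι_universal n hK k
  have : IsIso k' := isIso_of_yoneda_map_bijective_of_mem _ hK (F.wLe_mem n Z) k' fun W hW => by
    rw [← (F.yoneda_map_ι_app_bijective n hW Z).of_comp_iff']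
    simpa only [Function.comp_def, Category.assoc, hk'] using hk W hW
  exact ⟨asIso k'⟩

lemma nonempty_wGe_obj_iso {K Z : C} (hK : K ∈ F.Fge n) (k : Z ⟶ K)
    (hk : ∀ W ∈ F.Fge n, Function.Bijective fun x : K ⟶ W => k ≫ x) :
    Nonempty ((F.wGe n).obj Z ≅ K) := by
  obtain ⟨k', hk', -⟩ := F.π_universal n hK k
  have : IsIso k' := isIso_of_coyoneda_map_bijective_of_mem _ (F.wGe_mem n Z) hK k' fun W hW => by
    rw [← (F.coyoneda_map_π_app_bijective n hW Z).of_comp_iff']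
    simpa only [Function.comp_def, ← Category.assoc, hk'] using hk W hW
  exact ⟨asIso k'⟩

lemma nonempty_gr_obj_shift_iso (X : C) (a : ℤ) :
    Nonempty ((F.gr n).obj (X⟦a⟧) ≅ ((F.gr n).obj X)⟦a⟧) := by
  obtain ⟨e₁⟩ := F.nonempty_iso_wLe_obj n (F.Fle_shift n a _ (F.wLe_mem n X)) _
    fun W hW => F.yoneda_map_shift_ι_app_bijective n hW X a
  obtain ⟨e₂⟩ := F.nonempty_wGe_obj_iso n (F.Fge_shift n a _ (F.wGe_mem n _)) _
    fun W hW => F.coyoneda_map_shift_π_app_bijective n hW ((F.wLe n).obj X) a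
  exact ⟨(F.wGe n).mapIso e₁.symm ≪≫ e₂⟩

lemma nonempty_iso_wLe_obj_of_distTriang {T : Triangle C} (hT : T ∈ distTriang C) {K : C}
    {v : (F.wLe n).obj T.obj₂ ⟶ K} {w : K ⟶ ((F.wLe n).obj T.obj₁)⟦(1 : ℤ)⟧}
    (hK : Triangle.mk ((F.wLe n).map T.mor₁) v w ∈ distTriang C) :
    Nonempty (K ≅ (F.wLe n).obj T.obj₃) := by
  have comm₁ := (F.ι n).naturality T.mor₁
  obtain ⟨k, comm₂, comm₃⟩ := complete_distinguished_triangle_morphism _ T hK hT _ _ comm₁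
  have hK_le : K ∈ F.Fle n := F.Fle_ext₂ n _ (rot_of_distTriang _ hK) (F.wLe_mem n _)
    (F.Fle_shift n 1 _ (F.wLe_mem n _))
  refine F.nonempty_iso_wLe_obj n hK_le k fun W hW =>
    yoneda_map_hom₃_bijective (Triangle.homMk _ T _ _ k comm₁ comm₂ comm₃) hK hT W
      (F.yoneda_map_ι_app_bijective n hW _).2 (F.yoneda_map_ι_app_bijective n hW _)
      (F.yoneda_map_shift_ι_app_bijective n hW _ 1)
      (F.yoneda_map_shift_ι_app_bijective n hW _ 1).1

lemma nonempty_wGe_obj_iso_of_distTriang {T : Triangle C} (hT : T ∈ distTriang C) {K : C}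
    {v : (F.wGe n).obj T.obj₂ ⟶ K} {w : K ⟶ ((F.wGe n).obj T.obj₁)⟦(1 : ℤ)⟧}
    (hK : Triangle.mk ((F.wGe n).map T.mor₁) v w ∈ distTriang C) :
    Nonempty ((F.wGe n).obj T.obj₃ ≅ K) := by
  have comm₁ : T.mor₁ ≫ (F.π n).app T.obj₂ = (F.π n).app T.obj₁ ≫ (F.wGe n).map T.mor₁ :=
    (F.π n).naturality T.mor₁
  obtain ⟨k, comm₂, comm₃⟩ := complete_distinguished_triangle_morphism T _ hT hK _ _ comm₁
  have hK_ge : K ∈ F.Fge n := F.Fge_ext₂ n _ (rot_of_distTriang _ hK) (F.wGe_mem n _)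
    (F.Fge_shift n 1 _ (F.wGe_mem n _))
  refine F.nonempty_wGe_obj_iso n hK_ge k fun W hW =>
    coyoneda_map_hom₃_bijective (Triangle.homMk T _ _ _ k comm₁ comm₂ comm₃) hT hK W
      (F.coyoneda_map_π_app_bijective n hW _).1 (F.coyoneda_map_π_app_bijective n hW _)
      (F.coyoneda_map_shift_π_app_bijective n hW _ 1)
      (F.coyoneda_map_shift_π_app_bijective n hW _ 1).2

lemma nonempty_iso_gr_obj_of_distTriang {T : Triangle C} (hT : T ∈ distTriang C) {K : C}
    {v : (F.gr n).obj T.obj₂ ⟶ K} {w : K ⟶ ((F.gr n).obj T.obj₁)⟦(1 : ℤ)⟧}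
    (hK : Triangle.mk ((F.gr n).map T.mor₁) v w ∈ distTriang C) :
    Nonempty (K ≅ (F.gr n).obj T.obj₃) := by
  obtain ⟨K', v', w', hK'⟩ := distinguished_cocone_triangle ((F.wLe n).map T.mor₁)
  obtain ⟨e₁⟩ := F.nonempty_iso_wLe_obj_of_distTriang n hT hK'
  obtain ⟨e₂⟩ := F.nonempty_wGe_obj_iso_of_distTriang n hK' hK
  exact ⟨e₂.symm ≪≫ (F.wGe n).mapIso e₁⟩

lemma exists_wLe_map_α_app_eq_comp_ιmono (M : C) :
    ∃ q : (F.wLe n).obj (F.s.obj M) ⟶ (F.wLe (n - 1)).obj M,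
      (F.wLe n).map (F.α.app M) = q ≫ (F.ιmono n).app M := by
  have hnat : F.α.app M ≫ (F.π n).app M = F.s.map ((F.π n).app M) ≫ F.α.app _ :=
    (F.α.naturality _).symm
  have hzero : (F.ι n).app (F.s.obj M) ≫ F.s.map ((F.π n).app M) = 0 :=
    F.hom_vanish n (F.wLe_mem n _) (F.s_ge n _ (F.wGe_mem n M)) _
  have hcomp : ((F.ι n).app (F.s.obj M) ≫ F.α.app M) ≫ (F.π n).app M = 0 := by
    rw [Category.assoc, hnat, reassoc_of% hzero, zero_comp]
  obtain ⟨q, hq⟩ : ∃ q : (F.wLe n).obj (F.s.obj M) ⟶ (F.wLe (n - 1)).obj M,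
      (F.ι n).app (F.s.obj M) ≫ F.α.app M = q ≫ (F.ι (n - 1)).app M :=
    Triangle.coyoneda_exact₂ _ (F.triangle_dist n M) _ hcomp
  refine ⟨q, (F.yoneda_map_ι_app_bijective n (F.wLe_mem n _) M).1 ?_⟩
  dsimp only
  rw [Category.assoc, ← NatTrans.comp_app, F.ιmono_comp]
  exact ((F.ι n).naturality _).trans hq

lemma wGe_map_ιmono_app_eq_zero (M : C) : (F.wGe n).map ((F.ιmono n).app M) = 0 :=
  F.hom_vanish (n - 1) (F.wGe_preserves_le n (n - 1) _ (F.wLe_mem (n - 1) M))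
    (by simpa using F.wGe_mem n _) _

lemma gr_map_α_app_eq_zero (M : C) : (F.gr n).map (F.α.app M) = 0 := by
  obtain ⟨q, hq⟩ := F.exists_wLe_map_α_app_eq_comp_ιmono n M
  change (F.wGe n).map ((F.wLe n).map (F.α.app M)) = 0
  rw [hq, Functor.map_comp, F.wGe_map_ιmono_app_eq_zero, comp_zero]

end FilteredTriangulated

open FilteredTriangulated in
/-- If `Cn` is a cone of the composition `sM → M → N` of `α_M` with `f : M → N`,
so that `N → Cn → (sM)[1] → N[1]` is distinguished, then for every `n` we have
`gr_n Cn ≅ gr_n ((sM)[1]) ⊕ gr_n N`. -/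
theorem gr_cone_of_comp_alpha_splits {C : Type u} [Category.{v} C] [HasZeroObject C]
    [Preadditive C] [HasShift C ℤ] [∀ n : ℤ, (CategoryTheory.shiftFunctor C n).Additive]
    [Pretriangulated C] [HasBinaryBiproducts C] (F : FilteredTriangulated C)
    {M N Cn : C} (f : M ⟶ N) (g : N ⟶ Cn) (h : Cn ⟶ (F.s.obj M)⟦(1 : ℤ)⟧)
    (hT : Triangle.mk (F.α.app M ≫ f) g h ∈ (distTriang C)) (n : ℤ) :
    Nonempty ((F.gr n).obj Cn ≅
      ((F.gr n).obj ((F.s.obj M)⟦(1 : ℤ)⟧)) ⊞ ((F.gr n).obj N)) := by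
  obtain ⟨K, v, w, hK⟩ := distinguished_cocone_triangle ((F.gr n).map (F.α.app M ≫ f))
  obtain ⟨eK⟩ := F.nonempty_iso_gr_obj_of_distTriang n hT hK
  obtain ⟨eSplit⟩ := nonempty_iso_biprod_of_distTriang_of_mor₁_eq_zero hK
    (show (F.gr n).map (F.α.app M ≫ f) = 0 by
      rw [Functor.map_comp, F.gr_map_α_app_eq_zero, zero_comp])
  obtain ⟨eShift⟩ := F.nonempty_gr_obj_shift_iso n (F.s.obj M) 1
  exact ⟨eK.symm ≪≫ eSplit ≪≫ biprod.braiding _ _ ≪≫ biprod.mapIso eShift.symm (Iso.refl _)⟩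
end

section
/- Let D be a filtered triangulated category and let f : M → N be a morphism in D such that Hom(gr_n M, w_{≤ n-1} N) = 0 for all integers n. Then f = 0 if and only if gr_i f = 0 for all integers i. -/
open CategoryTheory CategoryTheory.Limits CategoryTheory.Pretriangulated

universe v u

namespace FilteredTriangulated

variable {C : Type u} [Category.{v} C] [HasZeroObject C] [Preadditive C] [HasShift C ℤ]
  [∀ n : ℤ, (CategoryTheory.shiftFunctor C n).Additive] [Pretriangulated C]

variable (F : FilteredTriangulated C)

theorem Fle_mono_of_le {m m' : ℤ} (h : m ≤ m') : F.Fle m ⊆ F.Fle m' := by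
  induction m', h using Int.leInduction with
  | base => exact le_rfl
  | succ k _ ih => exact ih.trans (F.le_mono k)

theorem eq_of_comp_ι_app_eq {n : ℤ} {X Z : C} (hX : X ∈ F.Fle n) {g₁ g₂ : X ⟶ (F.wLe n).obj Z}
    (h : g₁ ≫ (F.ι n).app Z = g₂ ≫ (F.ι n).app Z) : g₁ = g₂ :=
  (F.ι_universal n hX _).unique h rfl

theorem eq_of_π_app_comp_eq {n : ℤ} {Z Y : C} (hY : Y ∈ F.Fge n) {g₁ g₂ : (F.wGe n).obj Z ⟶ Y}
    (h : (F.π n).app Z ≫ g₁ = (F.π n).app Z ≫ g₂) : g₁ = g₂ :=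
  (F.π_universal n hY _).unique h rfl

theorem wLe_map_zero (n : ℤ) (X Y : C) : (F.wLe n).map (0 : X ⟶ Y) = 0 :=
  F.eq_of_comp_ι_app_eq (F.wLe_mem n X) (by rw [(F.ι n).naturality]; simp)

theorem wGe_map_zero (n : ℤ) (X Y : C) : (F.wGe n).map (0 : X ⟶ Y) = 0 :=
  F.eq_of_π_app_comp_eq (F.wGe_mem n Y) (by
    rw [← (F.π n).naturality, Functor.id_map, zero_comp, comp_zero])

theorem gr_map_zero (n : ℤ) (X Y : C) : (F.gr n).map (0 : X ⟶ Y) = 0 := by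
  change (F.wGe n).map ((F.wLe n).map 0) = 0
  rw [wLe_map_zero, wGe_map_zero]

theorem ι_app_comp_comp_π_app {n : ℤ} {M N : C} (f : M ⟶ N) :
    (F.ι n).app M ≫ f ≫ (F.π n).app N =
      (F.π n).app ((F.wLe n).obj M) ≫ (F.wGe n).map ((F.wLe n).map f) ≫
        (F.wGe n).map ((F.ι n).app N) := by
  have hι := (F.ι n).naturality f
  have hπ := (F.π n).naturality ((F.ι n).app N)
  have hπ' := (F.π n).naturality ((F.wLe n).map f)
  simp only [Functor.id_map, Functor.id_obj] at hι hπ hπ'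
  rw [← reassoc_of% hπ', ← hπ, reassoc_of% hι]

theorem ι_app_comp_eq_zero_of_sub_one {n : ℤ} {M N : C} (f : M ⟶ N)
    (hgr : (F.gr n).map f = 0)
    (hvanish : ∀ g : (F.gr n).obj M ⟶ (F.wLe (n - 1)).obj N, g = 0)
    (hpred : (F.ι (n - 1)).app M ≫ f = 0) : (F.ι n).app M ≫ f = 0 := by
  change (F.wGe n).map ((F.wLe n).map f) = 0 at hgr
  have hιmono : (F.ιmono n).app M ≫ (F.ι n).app M ≫ f = 0 := by
    rw [← Category.assoc, ← NatTrans.comp_app, F.ιmono_comp, hpred]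
  obtain ⟨g, hg⟩ : ∃ g : (F.wGe n).obj ((F.wLe n).obj M) ⟶ N,
      (F.ι n).app M ≫ f = (F.π n).app ((F.wLe n).obj M) ≫ g :=
    Triangle.yoneda_exact₂ _ (F.triangle_dist' n M) _ hιmono
  have hgπ : g ≫ (F.π n).app N = 0 := by
    refine F.eq_of_π_app_comp_eq (F.wGe_mem n N) ?_
    rw [comp_zero, ← reassoc_of% hg, F.ι_app_comp_comp_π_app, hgr, zero_comp, comp_zero]
  obtain ⟨h, rfl⟩ : ∃ h : (F.wGe n).obj ((F.wLe n).obj M) ⟶ (F.wLe (n - 1)).obj N,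
      g = h ≫ (F.ι (n - 1)).app N :=
    Triangle.coyoneda_exact₂ _ (F.triangle_dist n N) g hgπ
  have h0 : h = 0 := hvanish h
  rw [hg, h0, zero_comp, comp_zero]

theorem ι_app_comp_eq_zero_of_gr_map_eq_zero {M N : C} (f : M ⟶ N)
    (hgr : ∀ n : ℤ, (F.gr n).map f = 0)
    (hvanish : ∀ (n : ℤ) (g : (F.gr n).obj M ⟶ (F.wLe (n - 1)).obj N), g = 0) (n : ℤ) :
    (F.ι n).app M ≫ f = 0 := by
  obtain ⟨n₁, hN⟩ := F.exhaustive_ge N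
  rcases le_total n (n₁ - 1) with hn | hn
  · exact F.hom_vanish _ (F.Fle_mono_of_le hn (F.wLe_mem n M)) (by rwa [sub_add_cancel]) _
  induction n, hn using Int.leInduction with
  | base => exact F.hom_vanish _ (F.wLe_mem _ M) (by rwa [sub_add_cancel]) _
  | succ m _ ih =>
    exact F.ι_app_comp_eq_zero_of_sub_one f (hgr _) (hvanish _) (by rwa [add_sub_cancel_right])

theorem eq_zero_of_ι_app_comp_eq_zero {n : ℤ} {M N : C} (hM : M ∈ F.Fle n) {f : M ⟶ N}
    (hf : (F.ι n).app M ≫ f = 0) : f = 0 := by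
  have := F.ι_iso n M hM
  rwa [← cancel_epi ((F.ι n).app M), comp_zero]

end FilteredTriangulated

open FilteredTriangulated in
/-- If `Hom(gr_n M, w_{≤ n-1} N) = 0` for all integers `n`, then a morphism
`f : M → N` is zero if and only if `gr_i f = 0` for all integers `i`. -/
theorem eq_zero_iff_gr_map_eq_zero {C : Type u} [Category.{v} C] [HasZeroObject C]
    [Preadditive C] [HasShift C ℤ] [∀ n : ℤ, (CategoryTheory.shiftFunctor C n).Additive]
    [Pretriangulated C] (F : FilteredTriangulated C) {M N : C} (f : M ⟶ N)
    (hvanish : ∀ (n : ℤ) (g : (F.gr n).obj M ⟶ (F.wLe (n - 1)).obj N), g = 0) :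
    f = 0 ↔ ∀ i : ℤ, (F.gr i).map f = 0 := by
  refine ⟨fun hf i => hf ▸ F.gr_map_zero i M N, fun hgr => ?_⟩
  obtain ⟨n, hM⟩ := F.exhaustive_le M
  exact F.eq_zero_of_ι_app_comp_eq_zero hM
    (F.ι_app_comp_eq_zero_of_gr_map_eq_zero f hgr hvanish n)
end
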